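/- Let σ be a real m×m matrix. There exists a positive constant C (depending only on σ, m, and the μ_i) such that for all p ≥ 1, all δ ∈ (0,1], and all x ∈ ℝ^m, trace(σσᵀ ∇²𝒱_{p,δ}(x)) ≤ C p² δ² (𝒱_{p-1,δ}(x) + 𝒱_{p-2,δ}(x)). -/

import Mathlib

open scoped BigOperators
open MeasureTheory

noncomputable section

/-- The piecewise function `ψ` from Definition 1 of the paper. -/
def psi (t : ℝ) : ℝ :=
  if t ≤ -1 then -(1/2)
  else if t ≤ 0 then (t+1)^3 - (1/2)*(t+1)^4 - 1/2
  else t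

/-- `Ψ(x) = ∑ i, ψ(x_i)/μ_i`. -/
def Psi (m : ℕ) (μ : Fin m → ℝ) (x : Fin m → ℝ) : ℝ := ∑ i, psi (x i) / μ i

/-- `Ψ_δ(x) = ∑ i, ψ(δ x_i)/μ_i`. -/
def Psid (m : ℕ) (μ : Fin m → ℝ) (δ : ℝ) (x : Fin m → ℝ) : ℝ :=
  ∑ i, psi (δ * x i) / μ i

/-- The scaled Lyapunov function
`𝒱_{p,δ}(x) = (δ² Ψ(-x) + Ψ_δ(x) + m / min_i μ_i)^p`. -/
def Vpd (m : ℕ) (μ : Fin m → ℝ) (δ p : ℝ) (x : Fin m → ℝ) : ℝ :=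
  (δ ^ 2 * Psi m μ (-x) + Psid m μ δ x + (m : ℝ) / ⨅ i, μ i) ^ p

/-- The drift `b̃(x,u) = -(β̃/m) M e - M (x - ⟨e,x⟩⁺ u) - ⟨e,x⟩⁺ Γ u`, written
componentwise, where `M = diag(μ)` and `Γ = diag(γ)`. -/
def drift (m : ℕ) (μ γ : Fin m → ℝ) (β : ℝ) (x u : Fin m → ℝ) : Fin m → ℝ :=
  fun i => -(β / (m : ℝ)) * μ i - μ i * (x i - max (∑ j, x j) 0 * u i)
    - max (∑ j, x j) 0 * (γ i * u i)

/-- `trace(A ∇²f(x)) = ∑ i j, A_{ij} ∂_i ∂_j f(x)`. -/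
def traceHess (m : ℕ) (A : Matrix (Fin m) (Fin m) ℝ) (f : (Fin m → ℝ) → ℝ)
    (x : Fin m → ℝ) : ℝ :=
  ∑ i, ∑ j, A i j *
    fderiv ℝ (fun y => fderiv ℝ f y (Pi.single i (1 : ℝ))) x (Pi.single j (1 : ℝ))


/-! The base `F = δ²Ψ(-x) + Ψ_δ(x) + m / min μ` of `𝒱_{p,δ} = F^p` is a sum of one-variable
terms `κᵢ(xᵢ)` (`lyapTerm`) plus a constant, so its Hessian is diagonal and
`∂ᵢ∂ⱼ F^p = p F^{p-1} κᵢ'' [i = j] + p (p-1) F^{p-2} κᵢ' κⱼ'`.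
Since `0 ≤ ψ' ≤ 1` and `|ψ''| ≤ 3/2`, we get `|κᵢ'| ≤ 2δ/μᵢ` and `|κᵢ''| ≤ 3δ²/μᵢ`, which gives
the factor `p²δ²`. The constant `m / min μ` makes `F` positive, because each pair
`δ²ψ(-s) + ψ(δs)` is at least `-1/2`. -/

open Finset

lemma hasDerivAt_ite_le {f g f' g' : ℝ → ℝ} {a : ℝ}
    (hf : ∀ t ≤ a, HasDerivAt f (f' t) t) (hg : ∀ t, a ≤ t → HasDerivAt g (g' t) t)
    (hfg : f a = g a) (hfg' : f' a = g' a) (t : ℝ) :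
    HasDerivAt (fun t => if t ≤ a then f t else g t) (if t ≤ a then f' t else g' t) t := by
  rcases lt_trichotomy t a with ht | rfl | ht
  · rw [if_pos ht.le]
    refine (hf t ht.le).congr_of_eventuallyEq ?_
    filter_upwards [Iio_mem_nhds ht] with s hs
    exact if_pos (le_of_lt hs)
  · have hl : HasDerivWithinAt (fun s => if s ≤ t then f s else g s) (f' t) (Set.Iic t) t :=
      (hf t le_rfl).hasDerivWithinAt.congr (fun s hs => if_pos hs) (if_pos le_rfl)
    have hr : HasDerivWithinAt (fun s => if s ≤ t then f s else g s) (f' t) (Set.Ici t) t := by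
      rw [hfg']
      refine (hg t le_rfl).hasDerivWithinAt.congr (fun s hs => ?_) (by simp [hfg])
      split_ifs with h
      · rw [le_antisymm h hs, hfg]
      · rfl
    rw [if_pos le_rfl, ← hasDerivWithinAt_univ, ← Set.Iic_union_Ici]
    exact hl.union hr
  · rw [if_neg (not_le.2 ht)]
    refine (hg t ht.le).congr_of_eventuallyEq ?_
    filter_upwards [Ioi_mem_nhds ht] with s hs
    exact if_neg (not_le.2 hs)

def psi' (t : ℝ) : ℝ :=
  if t ≤ -1 then 0
  else if t ≤ 0 then 3 * (t + 1) ^ 2 - 2 * (t + 1) ^ 3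
  else 1

def psi'' (t : ℝ) : ℝ :=
  if t ≤ -1 then 0
  else if t ≤ 0 then 6 * (t + 1) - 6 * (t + 1) ^ 2
  else 0

lemma hasDerivAt_psi (t : ℝ) : HasDerivAt psi (psi' t) t := by
  have hP (t : ℝ) : HasDerivAt (fun t : ℝ => (t + 1) ^ 3 - (1 / 2) * (t + 1) ^ 4 - 1 / 2)
      (3 * (t + 1) ^ 2 - 2 * (t + 1) ^ 3) t := by
    have h := (hasDerivAt_id' t).add_const 1
    refine (((h.fun_pow 3).sub ((h.fun_pow 4).const_mul (1 / 2))).sub_const (1 / 2)).congr_deriv ?_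
    push_cast; ring
  have hinner := hasDerivAt_ite_le (a := 0) (fun t _ => hP t) (fun t _ => hasDerivAt_id' t)
    (by norm_num) (by norm_num)
  exact hasDerivAt_ite_le (a := -1) (fun t _ => hasDerivAt_const t (-(1 / 2) : ℝ))
    (fun t _ => hinner t) (by norm_num) (by norm_num) t

lemma hasDerivAt_psi' (t : ℝ) : HasDerivAt psi' (psi'' t) t := by
  have hP (t : ℝ) : HasDerivAt (fun t : ℝ => 3 * (t + 1) ^ 2 - 2 * (t + 1) ^ 3)
      (6 * (t + 1) - 6 * (t + 1) ^ 2) t := by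
    have h := (hasDerivAt_id' t).add_const 1
    refine (((h.fun_pow 2).const_mul 3).sub ((h.fun_pow 3).const_mul 2)).congr_deriv ?_
    push_cast; ring
  have hinner := hasDerivAt_ite_le (a := 0) (fun t _ => hP t)
    (fun t _ => hasDerivAt_const t (1 : ℝ)) (by norm_num) (by norm_num)
  exact hasDerivAt_ite_le (a := -1) (fun t _ => hasDerivAt_const t (0 : ℝ))
    (fun t _ => hinner t) (by norm_num) (by norm_num) t

lemma neg_half_le_psi (t : ℝ) : -(1 / 2) ≤ psi t := by
  unfold psi
  split_ifs with h₁ h₂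
  · exact le_rfl
  · nlinarith [mul_nonneg (pow_nonneg (by linarith : (0 : ℝ) ≤ t + 1) 3)
      (by linarith : (0 : ℝ) ≤ 1 - t)]
  · linarith

lemma psi_nonneg {t : ℝ} (ht : 0 ≤ t) : 0 ≤ psi t := by
  unfold psi
  split_ifs with h₁ h₂
  · linarith
  · norm_num [le_antisymm h₂ ht]
  · exact ht

lemma psi'_nonneg (t : ℝ) : 0 ≤ psi' t := by
  unfold psi'
  split_ifs with h₁ h₂
  · exact le_rfl
  · nlinarith [mul_nonneg (sq_nonneg (t + 1)) (by linarith : (0 : ℝ) ≤ 1 - 2 * t)]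
  · norm_num

lemma psi'_le_one (t : ℝ) : psi' t ≤ 1 := by
  unfold psi'
  split_ifs with h₁ h₂
  · norm_num
  · nlinarith [mul_nonneg (sq_nonneg t) (by linarith : (0 : ℝ) ≤ 3 + 2 * t)]
  · exact le_rfl

lemma abs_psi''_le (t : ℝ) : |psi'' t| ≤ 3 / 2 := by
  unfold psi''
  split_ifs with h₁ h₂
  · norm_num
  · rw [abs_le]
    constructor
    · nlinarith [mul_nonneg (by linarith : (0 : ℝ) ≤ t + 1) (by linarith : (0 : ℝ) ≤ -t)]
    · nlinarith [sq_nonneg (2 * t + 1)]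
  · norm_num

def lyapTerm (μᵢ δ s : ℝ) : ℝ := (δ ^ 2 * psi (-s) + psi (δ * s)) / μᵢ

def lyapTerm' (μᵢ δ s : ℝ) : ℝ := (-(δ ^ 2 * psi' (-s)) + δ * psi' (δ * s)) / μᵢ

def lyapTerm'' (μᵢ δ s : ℝ) : ℝ := (δ ^ 2 * psi'' (-s) + δ ^ 2 * psi'' (δ * s)) / μᵢ

section lyapTerm

variable {μᵢ δ : ℝ}

lemma hasDerivAt_lyapTerm (s : ℝ) : HasDerivAt (lyapTerm μᵢ δ) (lyapTerm' μᵢ δ s) s := by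
  have hneg := (hasDerivAt_psi (-s)).comp s (hasDerivAt_neg s)
  have hmul := (hasDerivAt_psi (δ * s)).comp s ((hasDerivAt_id' s).const_mul δ)
  refine ((hneg.const_mul (δ ^ 2)).add hmul).div_const μᵢ |>.congr_deriv ?_
  simp only [lyapTerm']
  ring

lemma hasDerivAt_lyapTerm' (s : ℝ) : HasDerivAt (lyapTerm' μᵢ δ) (lyapTerm'' μᵢ δ s) s := by
  have hneg := (hasDerivAt_psi' (-s)).comp s (hasDerivAt_neg s)
  have hmul := (hasDerivAt_psi' (δ * s)).comp s ((hasDerivAt_id' s).const_mul δ)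
  refine ((hneg.const_mul (δ ^ 2)).neg.add (hmul.const_mul δ)).div_const μᵢ |>.congr_deriv ?_
  simp only [lyapTerm'']
  ring

/-- At least one of `-s` and `δ s` is nonnegative, so one `ψ`-term is `≥ 0` and the other
`≥ -1/2`; the factor `δ² ≤ 1` does not spoil this. -/
lemma neg_half_div_le_lyapTerm (hμᵢ : 0 < μᵢ) (hδ₀ : 0 ≤ δ) (hδ₁ : δ ≤ 1) (s : ℝ) :
    -(1 / 2) / μᵢ ≤ lyapTerm μᵢ δ s := by
  refine div_le_div_of_nonneg_right ?_ hμᵢ.le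
  have hδsq : δ ^ 2 ≤ 1 := pow_le_one₀ hδ₀ hδ₁
  rcases le_total 0 s with hs | hs
  · nlinarith [neg_half_le_psi (-s), psi_nonneg (mul_nonneg hδ₀ hs)]
  · nlinarith [psi_nonneg (neg_nonneg.2 hs), neg_half_le_psi (δ * s), sq_nonneg δ]

lemma abs_lyapTerm'_le (hμᵢ : 0 < μᵢ) (hδ₀ : 0 ≤ δ) (hδ₁ : δ ≤ 1) (s : ℝ) :
    |lyapTerm' μᵢ δ s| ≤ δ * (2 / μᵢ) := by
  rw [lyapTerm', abs_div, abs_of_pos hμᵢ, ← mul_div_assoc]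
  refine div_le_div_of_nonneg_right ?_ hμᵢ.le
  have hδsq : δ ^ 2 ≤ δ := by nlinarith
  have h₁ := psi'_nonneg (-s)
  have h₂ := psi'_le_one (-s)
  have h₃ := psi'_nonneg (δ * s)
  have h₄ := psi'_le_one (δ * s)
  rw [abs_le]
  constructor <;> nlinarith [mul_nonneg (sq_nonneg δ) h₁, mul_nonneg hδ₀ h₃]

lemma abs_lyapTerm''_le (hμᵢ : 0 < μᵢ) (s : ℝ) : |lyapTerm'' μᵢ δ s| ≤ δ ^ 2 * (3 / μᵢ) := by
  rw [lyapTerm'', abs_div, abs_of_pos hμᵢ, ← mul_div_assoc]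
  refine div_le_div_of_nonneg_right ?_ hμᵢ.le
  have h₁ := abs_le.1 (abs_psi''_le (-s))
  have h₂ := abs_le.1 (abs_psi''_le (δ * s))
  rw [abs_le]
  constructor <;> nlinarith [sq_nonneg δ]

end lyapTerm

lemma Vpd_eq (m : ℕ) (μ : Fin m → ℝ) (δ p : ℝ) :
    Vpd m μ δ p = fun y => (∑ i, lyapTerm (μ i) δ (y i) + (m : ℝ) / ⨅ i, μ i) ^ p := by
  ext y
  simp only [Vpd, Psi, Psid, lyapTerm, mul_sum, ← sum_add_distrib, Pi.neg_apply, add_div,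
    mul_div_assoc]

lemma sum_lyapTerm_add_pos {m : ℕ} (hm : 1 ≤ m) {μ : Fin m → ℝ} (hμ : ∀ i, 0 < μ i) {δ : ℝ}
    (hδ₀ : 0 ≤ δ) (hδ₁ : δ ≤ 1) (y : Fin m → ℝ) :
    0 < ∑ i, lyapTerm (μ i) δ (y i) + (m : ℝ) / ⨅ i, μ i := by
  have : Nonempty (Fin m) := Fin.pos_iff_nonempty.mp hm
  obtain ⟨i₀, hi₀⟩ := Finite.exists_min μ
  have hinf : (⨅ i, μ i) = μ i₀ :=
    le_antisymm (ciInf_le (Finite.bddBelow_range μ) i₀) (le_ciInf hi₀)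
  have hterm (i : Fin m) : -(1 / 2) / μ i₀ ≤ lyapTerm (μ i) δ (y i) := by
    refine le_trans ?_ (neg_half_div_le_lyapTerm (hμ i) hδ₀ hδ₁ (y i))
    rw [div_le_div_iff₀ (hμ i₀) (hμ i)]
    linarith [hi₀ i]
  have hsum := sum_le_sum fun i (_ : i ∈ univ) => hterm i
  rw [sum_const, card_univ, Fintype.card_fin, nsmul_eq_mul] at hsum
  have hm' : (0 : ℝ) < m := by exact_mod_cast hm
  rw [hinf]
  calc (0 : ℝ) < m / (2 * μ i₀) := div_pos hm' (by linarith [hμ i₀])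
    _ = m * (-(1 / 2) / μ i₀) + m / μ i₀ := by field_simp; ring
    _ ≤ _ := by linarith

section SeparableRpow

variable {ι : Type*} [Fintype ι] {k k' k'' : ι → ℝ → ℝ} {c : ℝ}

lemma hasFDerivAt_sum_apply_add (hk : ∀ i s, HasDerivAt (k i) (k' i s) s) (y : ι → ℝ) :
    HasFDerivAt (fun z : ι → ℝ => ∑ i, k i (z i) + c)
      (∑ i, k' i (y i) • ContinuousLinearMap.proj (R := ℝ) (φ := fun _ : ι => ℝ) i) y :=
  (HasFDerivAt.fun_sum fun i _ =>
    (hk i (y i)).comp_hasFDerivAt y (hasFDerivAt_apply i y)).add_const c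

lemma fderiv_rpow_sum_apply_add_single [DecidableEq ι] (hk : ∀ i s, HasDerivAt (k i) (k' i s) s)
    (hpos : ∀ y : ι → ℝ, 0 < ∑ i, k i (y i) + c) (p : ℝ) (y : ι → ℝ) (i : ι) :
    fderiv ℝ (fun z : ι → ℝ => (∑ i, k i (z i) + c) ^ p) y (Pi.single i 1)
      = p * (∑ i, k i (y i) + c) ^ (p - 1) * k' i (y i) := by
  rw [((hasFDerivAt_sum_apply_add hk y).rpow_const (Or.inl (hpos y).ne')).fderiv]
  simp [Pi.single_apply, mul_assoc]

lemma fderiv_fderiv_rpow_sum_apply_add_single [DecidableEq ι]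
    (hk : ∀ i s, HasDerivAt (k i) (k' i s) s) (hk' : ∀ i s, HasDerivAt (k' i) (k'' i s) s)
    (hpos : ∀ y : ι → ℝ, 0 < ∑ i, k i (y i) + c) (p : ℝ) (x : ι → ℝ) (i j : ι) :
    fderiv ℝ (fun y => fderiv ℝ (fun z : ι → ℝ => (∑ i, k i (z i) + c) ^ p) y (Pi.single i 1)) x
        (Pi.single j 1)
      = p * (∑ i, k i (x i) + c) ^ (p - 1) * k'' i (x i) * (if i = j then 1 else 0)
        + p * (p - 1) * (∑ i, k i (x i) + c) ^ (p - 2) * k' i (x i) * k' j (x j) := by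
  simp_rw [fderiv_rpow_sum_apply_add_single hk hpos]
  have hF := ((hasFDerivAt_sum_apply_add hk x).rpow_const (p := p - 1)
    (Or.inl (hpos x).ne')).const_mul p
  have hki : HasFDerivAt (fun y : ι → ℝ => k' i (y i)) _ x :=
    (hk' i (x i)).comp_hasFDerivAt x (hasFDerivAt_apply (𝕜 := ℝ) i x)
  rw [(hF.fun_mul hki).fderiv, show p - 1 - 1 = p - 2 by ring]
  simp only [add_apply, smul_apply, ContinuousLinearMap.proj_apply, Pi.single_apply, smul_eq_mul,
    mul_ite, mul_one, mul_zero, _root_.sum_apply, sum_ite_eq', mem_univ, ↓reduceIte, add_right_inj]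
  ring

end SeparableRpow

lemma abs_rpow_hessian_entry_le {p E₁ E₂ δ u v w e α β γ : ℝ} (hp : 1 ≤ p) (hE₁ : 0 ≤ E₁)
    (hE₂ : 0 ≤ E₂) (hδ : 0 ≤ δ) (hα : 0 ≤ α) (hβ : 0 ≤ β) (hγ : 0 ≤ γ)
    (hu : |u| ≤ δ * α) (hv : |v| ≤ δ * β) (hw : |w| ≤ δ ^ 2 * γ) (he : |e| ≤ 1) :
    |p * E₁ * w * e + p * (p - 1) * E₂ * u * v| ≤ p ^ 2 * δ ^ 2 * (E₁ + E₂) * (γ + α * β) := by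
  have hp₀ : 0 ≤ p - 1 := by linarith
  have hpp : p ≤ p ^ 2 := by nlinarith
  have h₁ : |p * E₁ * w * e| ≤ p ^ 2 * δ ^ 2 * (E₁ * γ) :=
    calc |p * E₁ * w * e| = p * E₁ * |w| * |e| := by
          rw [abs_mul, abs_mul, abs_mul, abs_of_nonneg (by linarith), abs_of_nonneg hE₁]
      _ ≤ p * E₁ * (δ ^ 2 * γ) * 1 := by gcongr
      _ ≤ p ^ 2 * δ ^ 2 * (E₁ * γ) := by
          nlinarith [mul_le_mul_of_nonneg_right hpp (by positivity : 0 ≤ δ ^ 2 * (E₁ * γ))]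
  have h₂ : |p * (p - 1) * E₂ * u * v| ≤ p ^ 2 * δ ^ 2 * (E₂ * (α * β)) :=
    calc |p * (p - 1) * E₂ * u * v| = p * (p - 1) * E₂ * |u| * |v| := by
          rw [abs_mul, abs_mul, abs_mul, abs_mul, abs_of_nonneg (by linarith),
            abs_of_nonneg hp₀, abs_of_nonneg hE₂]
      _ ≤ p * (p - 1) * E₂ * (δ * α) * (δ * β) := by gcongr
      _ ≤ p ^ 2 * δ ^ 2 * (E₂ * (α * β)) := by
          nlinarith [mul_le_mul_of_nonneg_right (by nlinarith : p * (p - 1) ≤ p ^ 2)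
            (by positivity : 0 ≤ δ ^ 2 * (E₂ * (α * β)))]
  calc _ ≤ |p * E₁ * w * e| + |p * (p - 1) * E₂ * u * v| := abs_add_le _ _
    _ ≤ p ^ 2 * δ ^ 2 * (E₁ * γ + E₂ * (α * β)) := by linarith
    _ ≤ p ^ 2 * δ ^ 2 * (E₁ + E₂) * (γ + α * β) := by
        rw [mul_assoc _ (E₁ + E₂)]
        gcongr
        nlinarith [mul_nonneg hE₁ (mul_nonneg hα hβ), mul_nonneg hE₂ hγ]

lemma traceHess_le_of_abs_le {m : ℕ} {A : Matrix (Fin m) (Fin m) ℝ} {f : (Fin m → ℝ) → ℝ}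
    {x : Fin m → ℝ} {C : Fin m → Fin m → ℝ} {B : ℝ}
    (h : ∀ i j, |fderiv ℝ (fun y => fderiv ℝ f y (Pi.single i 1)) x (Pi.single j 1)|
      ≤ C i j * B) :
    traceHess m A f x ≤ (∑ i, ∑ j, |A i j| * C i j) * B := by
  rw [traceHess, sum_mul]
  refine sum_le_sum fun i _ => ?_
  rw [sum_mul]
  refine sum_le_sum fun j _ => ?_
  calc _ ≤ |A i j| * |fderiv ℝ (fun y => fderiv ℝ f y (Pi.single i 1)) x (Pi.single j 1)| :=
        (le_abs_self _).trans (abs_mul _ _).le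
    _ ≤ |A i j| * (C i j * B) := by gcongr; exact h i j
    _ = |A i j| * C i j * B := by ring

/-- There is a constant `C > 0` (depending only on `σ`, `m`, and the `μ_i`) such
that for all `p ≥ 1`, `δ ∈ (0,1]`, and `x ∈ ℝ^m`,
`trace(σσᵀ ∇²𝒱_{p,δ}(x)) ≤ C p² δ² (𝒱_{p-1,δ}(x) + 𝒱_{p-2,δ}(x))`. -/
theorem stmt_14 (m : ℕ) (hm : 1 ≤ m) (μ : Fin m → ℝ) (hμ : ∀ i, 0 < μ i)
    (σ : Matrix (Fin m) (Fin m) ℝ) :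
    ∃ C : ℝ, 0 < C ∧ ∀ p : ℝ, 1 ≤ p → ∀ δ : ℝ, 0 < δ → δ ≤ 1 → ∀ x : Fin m → ℝ,
      traceHess m (σ * σ.transpose) (Vpd m μ δ p) x ≤
        C * p ^ 2 * δ ^ 2 * (Vpd m μ δ (p - 1) x + Vpd m μ δ (p - 2) x) := by
  set C₀ := ∑ i, ∑ j, |(σ * σ.transpose) i j| * (3 / μ i + 2 / μ i * (2 / μ j))
  have hC₀ : 0 ≤ C₀ := sum_nonneg fun i _ => sum_nonneg fun j _ =>
    mul_nonneg (abs_nonneg _) (by have := hμ i; have := hμ j; positivity)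
  refine ⟨C₀ + 1, by linarith, fun p hp δ hδ₀ hδ₁ x => ?_⟩
  have hpos := sum_lyapTerm_add_pos hm hμ hδ₀.le hδ₁
  set F := ∑ i, lyapTerm (μ i) δ (x i) + (m : ℝ) / ⨅ i, μ i
  have hB : 0 ≤ p ^ 2 * δ ^ 2 * (F ^ (p - 1) + F ^ (p - 2)) := by
    have := hpos x
    positivity
  calc traceHess m (σ * σ.transpose) (Vpd m μ δ p) x
      ≤ C₀ * (p ^ 2 * δ ^ 2 * (F ^ (p - 1) + F ^ (p - 2))) := by
        refine traceHess_le_of_abs_le fun i j => ?_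
        rw [Vpd_eq, fderiv_fderiv_rpow_sum_apply_add_single (fun i => hasDerivAt_lyapTerm)
          (fun i => hasDerivAt_lyapTerm') hpos]
        have hμi := hμ i
        have hμj := hμ j
        convert abs_rpow_hessian_entry_le hp (Real.rpow_nonneg (hpos x).le _)
          (Real.rpow_nonneg (hpos x).le _) hδ₀.le (by positivity) (by positivity) (by positivity)
          (abs_lyapTerm'_le hμi hδ₀.le hδ₁ (x i)) (abs_lyapTerm'_le hμj hδ₀.le hδ₁ (x j))
          (abs_lyapTerm''_le hμi (x i)) (e := if i = j then 1 else 0)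
          (by split_ifs <;> norm_num) using 1
        ring
    _ ≤ (C₀ + 1) * (p ^ 2 * δ ^ 2 * (F ^ (p - 1) + F ^ (p - 2))) := by gcongr; linarith
    _ = _ := by rw [Vpd_eq, Vpd_eq]; ring

end
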